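/- arXiv:2501.06763 — 5 statements merged into one kernel-verified Lean document; each statement's English description precedes it below -/
import Mathlib

section
/- Let K be a field of characteristic ≠ 2 and q ∈ K* with q ≠ ±1, ε = q - q⁻¹. For x, y ∈ K*, choose u, v ∈ K* with x + x⁻¹ = 𝚚(u) and y + y⁻¹ = 𝚚(v) where 𝚚(t) = 2(qt+(qt)⁻¹)/(q+q⁻¹). Then x⁻¹y/(x⁻¹y-1)² + xy/(xy-1)² = 1/ε² holds if and only if v = q²u, or v = q⁻²u, or v = u⁻¹, or v = q⁻⁴u⁻¹ (assuming the denominators are nonzero). -/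
/-!
Write `a = xy + (xy)⁻¹ - 2` and `b = x⁻¹y + xy⁻¹ - 2`, so that the two summands are `a⁻¹` and
`b⁻¹`, while `a + b = st - 4` and `ab = (s - t)²` with `s = x + x⁻¹`, `t = y + y⁻¹`. The condition
thus becomes `(st - 4)ε² = (s - t)²`, and after the substitution `s = 𝚚(u)`, `t = 𝚚(v)` the
difference of the two sides factors as a nonzero multiple of
`(v - q²u)(q²v - u)(uv - 1)(q⁴uv - 1)`. When `q + q⁻¹ = 0` the substitution forces `s = t = 0`,
which makes one of the denominators vanish.
-/

variable {K : Type*} [Field K]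

theorem inv_add_inv_eq_inv_iff {a b c : K} (ha : a ≠ 0) (hb : b ≠ 0) (hc : c ≠ 0) :
    a⁻¹ + b⁻¹ = c⁻¹ ↔ (a + b) * c = a * b := by
  rw [inv_add_inv ha hb, ← one_div, div_eq_div_iff (mul_ne_zero ha hb) hc, one_mul]

theorem div_sub_one_sq_eq_inv {z : K} (hz : z ≠ 0) : z / (z - 1) ^ 2 = (z + z⁻¹ - 2)⁻¹ := by
  rw [show z + z⁻¹ - 2 = (z - 1) ^ 2 / z by field_simp; ring, inv_div]

theorem add_inv_sub_two_ne_zero {z : K} (hz : z ≠ 0) (hz1 : z - 1 ≠ 0) : z + z⁻¹ - 2 ≠ 0 :=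
  fun h => div_ne_zero hz (pow_ne_zero 2 hz1) (by rw [div_sub_one_sq_eq_inv hz, h, inv_zero])

theorem inv_mul_add_inv_sub_two_add_mul_add_inv_sub_two {x y : K} (hx : x ≠ 0) (hy : y ≠ 0) :
    (x⁻¹ * y + (x⁻¹ * y)⁻¹ - 2) + (x * y + (x * y)⁻¹ - 2) = (x + x⁻¹) * (y + y⁻¹) - 4 := by
  field_simp
  ring

theorem inv_mul_add_inv_sub_two_mul_mul_add_inv_sub_two {x y : K} (hx : x ≠ 0) (hy : y ≠ 0) :
    (x⁻¹ * y + (x⁻¹ * y)⁻¹ - 2) * (x * y + (x * y)⁻¹ - 2) = ((x + x⁻¹) - (y + y⁻¹)) ^ 2 := by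
  field_simp
  ring

theorem inv_mul_sub_one_mul_mul_sub_one {x y : K} (hx : x ≠ 0) (hy : y ≠ 0) :
    (x⁻¹ * y - 1) * (x * y - 1) = y * ((y + y⁻¹) - (x + x⁻¹)) := by
  field_simp
  ring

theorem inv_mul_div_add_mul_div_eq_one_div_sq_iff {x y e : K} (hx : x ≠ 0) (hy : y ≠ 0)
    (hd1 : x⁻¹ * y - 1 ≠ 0) (hd2 : x * y - 1 ≠ 0) (he : e ≠ 0) :
    x⁻¹ * y / (x⁻¹ * y - 1) ^ 2 + x * y / (x * y - 1) ^ 2 = 1 / e ^ 2 ↔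
      ((x + x⁻¹) * (y + y⁻¹) - 4) * e ^ 2 = ((x + x⁻¹) - (y + y⁻¹)) ^ 2 := by
  have hxy : x * y ≠ 0 := mul_ne_zero hx hy
  have hxy' : x⁻¹ * y ≠ 0 := mul_ne_zero (inv_ne_zero hx) hy
  rw [div_sub_one_sq_eq_inv hxy, div_sub_one_sq_eq_inv hxy', one_div,
    inv_add_inv_eq_inv_iff (add_inv_sub_two_ne_zero hxy' hd1) (add_inv_sub_two_ne_zero hxy hd2)
      (pow_ne_zero 2 he),
    inv_mul_add_inv_sub_two_add_mul_add_inv_sub_two hx hy,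
    inv_mul_add_inv_sub_two_mul_mul_add_inv_sub_two hx hy]

/-- The paper's `𝚚(t)`. -/
def qJoukowski (q t : K) : K := 2 * (q * t + (q * t)⁻¹) / (q + q⁻¹)

theorem ne_zero_and_sq_add_one_ne_zero_of_add_inv_ne_zero {q : K} (hq : q + q⁻¹ ≠ 0) :
    q ≠ 0 ∧ q ^ 2 + 1 ≠ 0 := by
  have hq0 : q ≠ 0 := by
    rintro rfl
    simp at hq
  refine ⟨hq0, fun h => hq ?_⟩
  field_simp
  linear_combination h

theorem qJoukowski_mul_sub_four_mul_sq_sub_sq {q u v : K} (hq : q + q⁻¹ ≠ 0) (hu : u ≠ 0)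
    (hv : v ≠ 0) :
    (qJoukowski q u * qJoukowski q v - 4) * (q - q⁻¹) ^ 2 - (qJoukowski q u - qJoukowski q v) ^ 2 =
      -4 * ((v - q ^ 2 * u) * (q ^ 2 * v - u) * (u * v - 1) * (q ^ 4 * u * v - 1)) /
        ((q ^ 2 + 1) ^ 2 * q ^ 2 * u ^ 2 * v ^ 2) := by
  obtain ⟨hq0, hq2⟩ := ne_zero_and_sq_add_one_ne_zero_of_add_inv_ne_zero hq
  unfold qJoukowski
  field_simp
  ring

theorem qJoukowski_mul_sub_four_mul_sq_eq_sq_iff {q u v : K} (h2 : (2 : K) ≠ 0)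
    (hq : q + q⁻¹ ≠ 0) (hu : u ≠ 0) (hv : v ≠ 0) :
    (qJoukowski q u * qJoukowski q v - 4) * (q - q⁻¹) ^ 2 = (qJoukowski q u - qJoukowski q v) ^ 2 ↔
      v = q ^ 2 * u ∨ v = (q ^ 2)⁻¹ * u ∨ v = u⁻¹ ∨ v = (q ^ 4)⁻¹ * u⁻¹ := by
  obtain ⟨hq0, hq2⟩ := ne_zero_and_sq_add_one_ne_zero_of_add_inv_ne_zero hq
  have h4 : (-4 : K) ≠ 0 := neg_ne_zero.mpr (by simpa [show (4 : K) = 2 * 2 by norm_num] using h2)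
  rw [← sub_eq_zero, qJoukowski_mul_sub_four_mul_sq_sub_sq hq hu hv, div_eq_zero_iff,
    or_iff_left (by positivity), mul_eq_zero, or_iff_right h4, mul_eq_zero, mul_eq_zero,
    mul_eq_zero, or_assoc, or_assoc]
  refine or_congr sub_eq_zero (or_congr ?_ (or_congr ?_ ?_))
  · rw [sub_eq_zero, eq_inv_mul_iff_mul_eq₀ (pow_ne_zero 2 hq0)]
  · rw [sub_eq_zero, mul_eq_one_iff_inv_eq₀ hu, eq_comm]
  · rw [sub_eq_zero, mul_eq_one_iff_inv_eq₀ (mul_ne_zero (pow_ne_zero 4 hq0) hu), mul_inv, eq_comm]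

theorem sub_inv_ne_zero {q : K} (hq0 : q ≠ 0) (hq1 : q ≠ 1) (hqm1 : q ≠ -1) : q - q⁻¹ ≠ 0 := by
  rw [show q - q⁻¹ = (q - 1) * (q + 1) / q by field_simp; ring]
  exact div_ne_zero
    (mul_ne_zero (sub_ne_zero.mpr hq1) fun h => hqm1 (eq_neg_of_add_eq_zero_left h)) hq0

theorem stmt1_general (K : Type) [Field K] (hchar : ringChar K ≠ 2)
    (q : K) (hq1 : q ≠ 1) (hqm1 : q ≠ -1)
    (x y u v : K) (hx : x ≠ 0) (hy : y ≠ 0) (hu : u ≠ 0) (hv : v ≠ 0)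
    (hd1 : x⁻¹ * y - 1 ≠ 0) (hd2 : x * y - 1 ≠ 0)
    (hxu : x + x⁻¹ = 2 * (q * u + (q * u)⁻¹) / (q + q⁻¹))
    (hyv : y + y⁻¹ = 2 * (q * v + (q * v)⁻¹) / (q + q⁻¹)) :
    x⁻¹ * y / (x⁻¹ * y - 1) ^ 2 + x * y / (x * y - 1) ^ 2 = 1 / (q - q⁻¹) ^ 2 ↔
      v = q ^ 2 * u ∨ v = (q ^ 2)⁻¹ * u ∨ v = u⁻¹ ∨ v = (q ^ 4)⁻¹ * u⁻¹ := by
  by_cases hq : q + q⁻¹ = 0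
  · rw [hq, div_zero] at hxu hyv
    have := inv_mul_sub_one_mul_mul_sub_one hx hy
    rw [hxu, hyv, sub_self, mul_zero] at this
    exact absurd this (mul_ne_zero hd1 hd2)
  have hq0 := (ne_zero_and_sq_add_one_ne_zero_of_add_inv_ne_zero hq).1
  rw [inv_mul_div_add_mul_div_eq_one_div_sq_iff hx hy hd1 hd2 (sub_inv_ne_zero hq0 hq1 hqm1),
    hxu, hyv]
  exact qJoukowski_mul_sub_four_mul_sq_eq_sq_iff (Ring.two_ne_zero hchar) hq hu hv

/-- The intertwiner invertibility condition `x⁻¹y/(x⁻¹y-1)² + xy/(xy-1)² = 1/ε²`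
holds iff, under the substitution `x + x⁻¹ = 𝚚(u)`, `y + y⁻¹ = 𝚚(v)`,
one has `v = q²u`, `v = q⁻²u`, `v = u⁻¹` or `v = q⁻⁴u⁻¹`. -/
theorem stmt1 (K : Type) [Field K] [IsAlgClosed K] (hchar : ringChar K ≠ 2)
    (q : K) (hq0 : q ≠ 0) (hq1 : q ≠ 1) (hqm1 : q ≠ -1)
    (x y u v : K) (hx : x ≠ 0) (hy : y ≠ 0) (hu : u ≠ 0) (hv : v ≠ 0)
    (hd1 : x⁻¹ * y - 1 ≠ 0) (hd2 : x * y - 1 ≠ 0)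
    (hxu : x + x⁻¹ = 2 * (q * u + (q * u)⁻¹) / (q + q⁻¹))
    (hyv : y + y⁻¹ = 2 * (q * v + (q * v)⁻¹) / (q + q⁻¹)) :
    x⁻¹ * y / (x⁻¹ * y - 1) ^ 2 + x * y / (x * y - 1) ^ 2 = 1 / (q - q⁻¹) ^ 2 ↔
      v = q ^ 2 * u ∨ v = (q ^ 2)⁻¹ * u ∨ v = u⁻¹ ∨ v = (q ^ 4)⁻¹ * u⁻¹ :=
  stmt1_general K hchar q hq1 hqm1 x y u v hx hy hu hv hd1 hd2 hxu hyv
end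

section
/- Let K be a field of characteristic ≠ 2. For x, y ∈ K, choose u, v ∈ K with x² = u(u+1) and y² = v(v+1). Then (x+y)² + (x-y)² = (x²-y²)² holds if and only if u - v = ±1, or u + v = 0, or u + v = -2. -/
/-! Substituting `x² = u(u+1)` and `y² = v(v+1)`, the difference of the two sides,
`(x² - y²)² - 2(x² + y²)`, factors as `(u - v - 1)(u - v + 1)(u + v)(u + v + 2)`. -/

theorem sq_sub_sq_sq_sub_add_sq_eq_mul {R : Type*} [CommRing R] {x y u v : R}
    (hxu : x ^ 2 = u * (u + 1)) (hyv : y ^ 2 = v * (v + 1)) :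
    (x ^ 2 - y ^ 2) ^ 2 - ((x + y) ^ 2 + (x - y) ^ 2) =
      (u - v - 1) * (u - v + 1) * (u + v) * (u + v + 2) := by
  linear_combination (x ^ 2 + u * (u + 1) - y ^ 2 - v * (v + 1) - 2) * hxu +
    (y ^ 2 + v * (v + 1) - x ^ 2 - u * (u + 1) - 2) * hyv

theorem add_sq_add_sub_sq_eq_sq_sub_sq_sq_iff {R : Type*} [CommRing R] [NoZeroDivisors R]
    {x y u v : R} (hxu : x ^ 2 = u * (u + 1)) (hyv : y ^ 2 = v * (v + 1)) :
    (x + y) ^ 2 + (x - y) ^ 2 = (x ^ 2 - y ^ 2) ^ 2 ↔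
      u - v = 1 ∨ u - v = -1 ∨ u + v = 0 ∨ u + v = -2 := by
  rw [eq_comm, ← sub_eq_zero, sq_sub_sq_sq_sub_add_sq_eq_mul hxu hyv]
  simp only [mul_eq_zero, sub_eq_zero, add_eq_zero_iff_eq_neg, or_assoc]

theorem stmt2_general (K : Type) [Field K]
    (x y u v : K) (hxu : x ^ 2 = u * (u + 1)) (hyv : y ^ 2 = v * (v + 1)) :
    (x + y) ^ 2 + (x - y) ^ 2 = (x ^ 2 - y ^ 2) ^ 2 ↔
      u - v = 1 ∨ u - v = -1 ∨ u + v = 0 ∨ u + v = -2 :=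
  add_sq_add_sub_sq_eq_sq_sub_sq_sq_iff hxu hyv

/-- Degenerate intertwiner vanishing condition: with `x² = u(u+1)` and `y² = v(v+1)`,
`(x+y)² + (x-y)² = (x²-y²)²` holds iff `u - v = ±1`, `u + v = 0` or `u + v = -2`. -/
theorem stmt2 (K : Type) [Field K] [IsAlgClosed K] (hchar : ringChar K ≠ 2)
    (x y u v : K) (hxu : x ^ 2 = u * (u + 1)) (hyv : y ^ 2 = v * (v + 1)) :
    (x + y) ^ 2 + (x - y) ^ 2 = (x ^ 2 - y ^ 2) ^ 2 ↔
      u - v = 1 ∨ u - v = -1 ∨ u + v = 0 ∨ u + v = -2 :=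
  stmt2_general K x y u v hxu hyv
end

section
/- Let λ be a multipartition of n and s, t ∈ Std(λ) standard tableaux with τ·s = t for τ ∈ S_n. Then for ANY reduced expression τ = s_{i_k}⋯s_{i_1}, each partial product s_{i_l}⋯s_{i_1}·s is a standard tableau for l = 1,…,k. -/
/-- A multipartition-like shape: `comps` components, each either strict
(shifted diagram) or an ordinary partition diagram.  A box is a triple
`(l, i, j)`: component `l`, row `i`, column `j` (all 0-indexed). -/
structure MultiShape where
  comps : ℕ
  isStrict : ℕ → Bool
  part : ℕ → ℕ → ℕ

namespace MultiShape

/-- The set of boxes of the diagram of the shape.  In a strict component the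
`i`-th row is shifted `i` steps to the right. -/
def cells (Λ : MultiShape) : Set (ℕ × ℕ × ℕ) :=
  {b | b.1 < Λ.comps ∧
    (if Λ.isStrict b.1 then
        b.2.1 ≤ b.2.2 ∧ b.2.2 < b.2.1 + Λ.part b.1 b.2.1
      else b.2.2 < Λ.part b.1 b.2.1)}

/-- `p : ℕ → ℕ` is a strict partition: weakly decreasing and strictly
decreasing on nonzero parts. -/
def IsStrictPartFun (p : ℕ → ℕ) : Prop :=
  Antitone p ∧ ∀ i, p (i + 1) ≠ 0 → p (i + 1) < p i

/-- Well-formedness of a shape: strict components are strict partitions,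
ordinary components are partitions, and everything beyond `comps` is
normalized to zero. -/
def WellFormed (Λ : MultiShape) : Prop :=
  (∀ l < Λ.comps, Λ.isStrict l = true → IsStrictPartFun (Λ.part l)) ∧
  (∀ l < Λ.comps, Λ.isStrict l = false → Antitone (Λ.part l)) ∧
  (∀ l, Λ.comps ≤ l → (Λ.part l = fun _ => 0) ∧ Λ.isStrict l = false)

/-- `t` is a standard tableau of shape `Λ` with entries `1,…,n`: a bijection
from the boxes onto `{1,…,n}`, increasing along rows and columns of each
component, normalized to `0` outside the diagram. -/
def IsStd (Λ : MultiShape) (n : ℕ) (t : ℕ × ℕ × ℕ → ℕ) : Prop :=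
  Set.BijOn t Λ.cells (Set.Icc 1 n) ∧
  (∀ b ∈ Λ.cells, ∀ b' ∈ Λ.cells,
      b.1 = b'.1 → b.2.1 = b'.2.1 → b.2.2 < b'.2.2 → t b < t b') ∧
  (∀ b ∈ Λ.cells, ∀ b' ∈ Λ.cells,
      b.1 = b'.1 → b.2.2 = b'.2.2 → b.2.1 < b'.2.1 → t b < t b') ∧
  (∀ b, b ∉ Λ.cells → t b = 0)

/-- The simple transposition `s_k = (k, k+1)` acting on entries. -/
def sw (k : ℕ) : Equiv.Perm ℕ := Equiv.swap k (k + 1)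

/-- The permutation `s_{i_k} ⋯ s_{i_1}` associated to the word `w = [i_1,…,i_k]`
(the first letter acts first). -/
def wordPerm (w : List ℕ) : Equiv.Perm ℕ :=
  w.foldl (fun σ k => sw k * σ) 1

/-! Multiplying by a simple transposition changes the inversion set by exactly one pair, and
every permutation of `{1, …, n}` is a word whose length is its number of inversions. Hence each
letter of a reduced word of `τ` adds an inversion, and the inversion sets of its prefixes grow up
to that of `τ`. A prefix therefore misorders only pairs of entries that `τ` misorders, and since
`s` and `τ·s` are both standard, `τ` misorders no two entries of `s` in a common row or column. -/

lemma foldl_sw_mul (u : List ℕ) (σ : Equiv.Perm ℕ) :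
    u.foldl (fun σ k => sw k * σ) σ = wordPerm u * σ := by
  induction u generalizing σ with
  | nil => simp [wordPerm]
  | cons m u ih => rw [wordPerm, List.foldl_cons, List.foldl_cons, ih, ih, mul_one, mul_assoc]

lemma wordPerm_append (u v : List ℕ) : wordPerm (u ++ v) = wordPerm v * wordPerm u := by
  rw [wordPerm, List.foldl_append, foldl_sw_mul]
  rfl

lemma wordPerm_singleton (m : ℕ) : wordPerm [m] = sw m := mul_one _

lemma wordPerm_cons (m : ℕ) (u : List ℕ) : wordPerm (m :: u) = wordPerm u * sw m := by
  rw [← List.singleton_append, wordPerm_append, wordPerm_singleton]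

lemma sw_apply (m x : ℕ) : sw m x = if x = m then m + 1 else if x = m + 1 then m else x :=
  Equiv.swap_apply_def _ _ _

lemma sw_lt_sw_iff {m x y : ℕ} (h₁ : ¬(x = m ∧ y = m + 1)) (h₂ : ¬(x = m + 1 ∧ y = m)) :
    sw m x < sw m y ↔ x < y := by
  rw [sw_apply, sw_apply]
  split_ifs <;> omega

abbrev symmGroup (n : ℕ) : Subgroup (Equiv.Perm ℕ) :=
  fixingSubgroup (Equiv.Perm ℕ) (Set.Icc 1 n)ᶜ

section symmGroup
variable {n m : ℕ} {σ : Equiv.Perm ℕ}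

lemma apply_eq_self_of_mem_symmGroup (hσ : σ ∈ symmGroup n) {x : ℕ} (hx : x ∉ Set.Icc 1 n) :
    σ x = x :=
  (mem_fixingSubgroup_iff _).1 hσ x hx

lemma apply_mem_Icc_iff (hσ : σ ∈ symmGroup n) (x : ℕ) :
    σ x ∈ Set.Icc 1 n ↔ x ∈ Set.Icc 1 n := by
  constructor
  · intro h
    by_contra hx
    rw [apply_eq_self_of_mem_symmGroup hσ hx] at h
    exact hx h
  · intro hx
    by_contra h
    rw [σ.injective (apply_eq_self_of_mem_symmGroup hσ h)] at h
    exact h hx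

lemma sw_mem_symmGroup (hm : 1 ≤ m) (hmn : m + 1 ≤ n) : sw m ∈ symmGroup n := by
  refine (mem_fixingSubgroup_iff _).2 fun x hx => ?_
  simp only [Set.mem_compl_iff, Set.mem_Icc, not_and, not_le] at hx
  rw [Equiv.Perm.smul_def, sw_apply]
  split_ifs <;> omega

lemma wordPerm_mem_symmGroup {w : List ℕ} (hw : ∀ k ∈ w, 1 ≤ k ∧ k + 1 ≤ n) :
    wordPerm w ∈ symmGroup n := by
  induction w with
  | nil => exact one_mem _
  | cons m u ih =>
    rw [List.forall_mem_cons] at hw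
    rw [wordPerm_cons]
    exact mul_mem (ih hw.2) (sw_mem_symmGroup hw.1.1 hw.1.2)

/-- Otherwise `σ⁻¹` would be a strictly increasing bijection of `ℕ`, hence the identity. -/
lemma exists_descent_of_ne_one (hσ : σ ∈ symmGroup n) (h1 : σ ≠ 1) :
    ∃ m, 1 ≤ m ∧ m + 1 ≤ n ∧ σ⁻¹ (m + 1) < σ⁻¹ m := by
  by_contra! hasc
  have hinv := inv_mem hσ
  have hmono : StrictMono ⇑σ⁻¹ := strictMono_nat_of_lt_succ fun x => by
    refine lt_of_le_of_ne ?_ (σ⁻¹.injective.ne x.lt_succ_self.ne)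
    by_cases hx : 1 ≤ x ∧ x + 1 ≤ n
    · exact hasc x hx.1 hx.2
    obtain rfl | hx0 := Nat.eq_zero_or_pos x
    · rw [apply_eq_self_of_mem_symmGroup hinv (x := 0) (by simp)]
      exact Nat.zero_le _
    rw [apply_eq_self_of_mem_symmGroup hinv (x := x + 1) (by simp; omega)]
    by_cases hxI : x ∈ Set.Icc 1 n
    · have := (apply_mem_Icc_iff hinv x).2 hxI
      simp only [Set.mem_Icc] at this hxI
      omega
    · rw [apply_eq_self_of_mem_symmGroup hinv hxI]
      omega
  have := Subsingleton.elim (hmono.orderIsoOfSurjective _ σ⁻¹.surjective) (OrderIso.refl ℕ)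
  exact h1 (inv_eq_one.1 (Equiv.ext fun x => congrArg (· x) (congrArg DFunLike.coe this)))

end symmGroup

def invSet (n : ℕ) (σ : Equiv.Perm ℕ) : Finset (ℕ × ℕ) :=
  (Finset.Icc 1 n ×ˢ Finset.Icc 1 n).filter fun p => p.1 < p.2 ∧ σ p.2 < σ p.1

section invSet
variable {n m : ℕ} {σ : Equiv.Perm ℕ}

lemma mem_invSet {a b : ℕ} :
    (a, b) ∈ invSet n σ ↔ a ∈ Set.Icc 1 n ∧ b ∈ Set.Icc 1 n ∧ a < b ∧ σ b < σ a := by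
  simp [invSet, and_assoc]

@[simp]
lemma invSet_one : invSet n 1 = ∅ := by
  ext ⟨a, b⟩
  simp only [mem_invSet, Equiv.Perm.coe_one, id_eq, Finset.notMem_empty, iff_false]
  omega

/-- Left multiplication by `s_m` swaps the values `m, m + 1`, so it only toggles the pair of
positions carrying them. -/
lemma invSet_sw_mul_subset :
    invSet n (sw m * σ) ⊆ insert (σ⁻¹ m, σ⁻¹ (m + 1)) (invSet n σ) := by
  rintro ⟨a, b⟩ hab
  rw [mem_invSet, Equiv.Perm.mul_apply, Equiv.Perm.mul_apply] at hab
  rw [Finset.mem_insert, mem_invSet, Prod.mk.injEq, Equiv.Perm.eq_inv_iff_eq,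
    Equiv.Perm.eq_inv_iff_eq]
  by_cases hσ : σ a = m ∧ σ b = m + 1
  · exact Or.inl hσ
  · refine Or.inr ⟨hab.1, hab.2.1, hab.2.2.1, (sw_lt_sw_iff ?_ (hσ ·.symm)).1 hab.2.2.2⟩
    rintro ⟨hb, ha⟩
    have := hab.2.2.2
    rw [hb, ha, sw_apply, sw_apply] at this
    simp at this

lemma invSet_subset_sw_mul (h : σ⁻¹ m < σ⁻¹ (m + 1)) :
    invSet n σ ⊆ invSet n (sw m * σ) := by
  rintro ⟨a, b⟩ hab
  rw [mem_invSet] at hab ⊢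
  refine ⟨hab.1, hab.2.1, hab.2.2.1, ?_⟩
  rw [Equiv.Perm.mul_apply, Equiv.Perm.mul_apply, sw_lt_sw_iff _ _]
  · exact hab.2.2.2
  · rintro ⟨hb, ha⟩
    rw [← Equiv.Perm.eq_inv_iff_eq] at ha hb
    omega
  · rintro ⟨hb, ha⟩
    have := hab.2.2.2
    omega

lemma card_invSet_sw_mul_le : (invSet n (sw m * σ)).card ≤ (invSet n σ).card + 1 :=
  (Finset.card_le_card invSet_sw_mul_subset).trans (Finset.card_insert_le _ _)

lemma card_invSet_sw_mul_of_lt (hσ : σ ∈ symmGroup n) (hm : 1 ≤ m) (hmn : m + 1 ≤ n)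
    (h : σ⁻¹ m < σ⁻¹ (m + 1)) : (invSet n (sw m * σ)).card = (invSet n σ).card + 1 := by
  have hinv := inv_mem hσ
  have hp : (σ⁻¹ m, σ⁻¹ (m + 1)) ∈ invSet n (sw m * σ) := by
    rw [mem_invSet, apply_mem_Icc_iff hinv, apply_mem_Icc_iff hinv]
    simp only [Equiv.Perm.mul_apply, Equiv.Perm.coe_inv, Equiv.apply_symm_apply, sw,
      Equiv.swap_apply_left, Equiv.swap_apply_right, Set.mem_Icc]
    exact ⟨⟨hm, by omega⟩, ⟨by omega, hmn⟩, h, m.lt_succ_self⟩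
  have hp' : (σ⁻¹ m, σ⁻¹ (m + 1)) ∉ invSet n σ := by
    simp [mem_invSet]
  rw [← Finset.card_insert_of_notMem hp']
  exact congrArg Finset.card
    (invSet_sw_mul_subset.antisymm (Finset.insert_subset hp (invSet_subset_sw_mul h)))

lemma card_invSet_sw_mul_of_gt (hσ : σ ∈ symmGroup n) (hm : 1 ≤ m) (hmn : m + 1 ≤ n)
    (h : σ⁻¹ (m + 1) < σ⁻¹ m) : (invSet n σ).card = (invSet n (sw m * σ)).card + 1 := by
  have key := card_invSet_sw_mul_of_lt (mul_mem (sw_mem_symmGroup hm hmn) hσ) hm hmn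
  simp only [mul_inv_rev, Equiv.Perm.mul_apply, sw, Equiv.swap_inv, Equiv.swap_apply_left,
    Equiv.swap_apply_right, ← mul_assoc, Equiv.swap_mul_self, one_mul] at key
  exact key h

end invSet

section words
variable {n : ℕ}

lemma card_invSet_wordPerm_mul_le (u : List ℕ) (σ : Equiv.Perm ℕ) :
    (invSet n (wordPerm u * σ)).card ≤ (invSet n σ).card + u.length := by
  induction u generalizing σ with
  | nil => simp [wordPerm]
  | cons m u ih =>
    have hrest := ih (sw m * σ)
    have hfirst := card_invSet_sw_mul_le (n := n) (m := m) (σ := σ)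
    rw [wordPerm_cons, mul_assoc, List.length_cons]
    omega

/-- Peeling off descents one at a time, as in bubble sort. -/
lemma exists_word_length_eq_card_invSet {σ : Equiv.Perm ℕ} (hσ : σ ∈ symmGroup n) :
    ∃ w, (∀ k ∈ w, 1 ≤ k ∧ k + 1 ≤ n) ∧ wordPerm w = σ ∧ w.length = (invSet n σ).card := by
  induction hN : (invSet n σ).card generalizing σ with
  | zero =>
    obtain rfl : σ = 1 := by
      by_contra h1
      obtain ⟨m, hm, hmn, hdesc⟩ := exists_descent_of_ne_one hσ h1
      have := card_invSet_sw_mul_of_gt hσ hm hmn hdesc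
      omega
    exact ⟨[], by simp, rfl, rfl⟩
  | succ N ih =>
    have h1 : σ ≠ 1 := by
      rintro rfl
      simp at hN
    obtain ⟨m, hm, hmn, hdesc⟩ := exists_descent_of_ne_one hσ h1
    have hcard := card_invSet_sw_mul_of_gt hσ hm hmn hdesc
    obtain ⟨u, hu, huσ, hlen⟩ :=
      ih (mul_mem (sw_mem_symmGroup hm hmn) hσ) (by omega)
    refine ⟨u ++ [m], ?_, ?_, by simp [hlen]⟩
    · simp only [List.forall_mem_append, List.forall_mem_singleton]
      exact ⟨hu, hm, hmn⟩
    · rw [wordPerm_append, huσ, wordPerm_singleton, ← mul_assoc, sw, Equiv.swap_mul_self,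
        one_mul]

def IsReducedWord (n : ℕ) (w : List ℕ) : Prop :=
  (∀ k ∈ w, 1 ≤ k ∧ k + 1 ≤ n) ∧
    ∀ w' : List ℕ, (∀ k ∈ w', 1 ≤ k ∧ k + 1 ≤ n) → wordPerm w' = wordPerm w →
      w.length ≤ w'.length

lemma IsReducedWord.length_le_card_invSet {w : List ℕ} (hw : IsReducedWord n w) :
    w.length ≤ (invSet n (wordPerm w)).card := by
  obtain ⟨w', hw', hw'w, hlen⟩ := exists_word_length_eq_card_invSet (wordPerm_mem_symmGroup hw.1)
  exact hlen ▸ hw.2 w' hw' hw'w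

/-- A letter removing an inversion would leave the whole word with fewer inversions than
letters, contradicting `length_le_card_invSet`. -/
lemma IsReducedWord.inv_lt_inv {u v : List ℕ} {m : ℕ} (hw : IsReducedWord n (u ++ m :: v)) :
    (wordPerm u)⁻¹ m < (wordPerm u)⁻¹ (m + 1) := by
  have hletters := hw.1
  simp only [List.forall_mem_append, List.forall_mem_cons] at hletters
  obtain ⟨hu, ⟨hm, hmn⟩, -⟩ := hletters
  by_contra! hge
  have hdesc : (wordPerm u)⁻¹ (m + 1) < (wordPerm u)⁻¹ m :=
    hge.lt_of_ne ((wordPerm u)⁻¹.injective.ne m.lt_succ_self.ne')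
  have h₁ := card_invSet_sw_mul_of_gt (wordPerm_mem_symmGroup hu) hm hmn hdesc
  have h₂ := card_invSet_wordPerm_mul_le (n := n) u 1
  have h₃ := card_invSet_wordPerm_mul_le (n := n) v (sw m * wordPerm u)
  have h₄ := hw.length_le_card_invSet
  rw [wordPerm_append, wordPerm_cons, mul_assoc] at h₄
  simp only [mul_one, invSet_one, Finset.card_empty, zero_add] at h₂
  simp only [List.length_append, List.length_cons] at h₄
  omega

lemma IsReducedWord.invSet_subset {u v : List ℕ} (hw : IsReducedWord n (u ++ v)) :
    invSet n (wordPerm u) ⊆ invSet n (wordPerm (u ++ v)) := by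
  induction v generalizing u with
  | nil => simp
  | cons m v ih =>
    have hw' : IsReducedWord n ((u ++ [m]) ++ v) := by simpa using hw
    calc invSet n (wordPerm u) ⊆ invSet n (sw m * wordPerm u) := invSet_subset_sw_mul hw.inv_lt_inv
      _ = invSet n (wordPerm (u ++ [m])) := by rw [wordPerm_append, wordPerm_singleton]
      _ ⊆ invSet n (wordPerm (u ++ m :: v)) := by simpa using ih hw'

end words

/-- `σ` lies below `τ` in the weak order, so it misorders only pairs of entries that `τ`
misorders, and `τ` misorders no pair in a common row or column of `t`. -/
lemma IsStd.comp_of_invSet_subset {Λ : MultiShape} {n : ℕ} {t : ℕ × ℕ × ℕ → ℕ}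
    {σ τ : Equiv.Perm ℕ} (ht : Λ.IsStd n t) (hτt : Λ.IsStd n (⇑τ ∘ t)) (hσ : σ ∈ symmGroup n)
    (hsub : invSet n σ ⊆ invSet n τ) : Λ.IsStd n (⇑σ ∘ t) := by
  have hkeep : ∀ b ∈ Λ.cells, ∀ b' ∈ Λ.cells, t b < t b' → τ (t b) < τ (t b') →
      σ (t b) < σ (t b') := by
    intro b hb b' hb' hlt hτlt
    by_contra! hge
    have hinv : (t b, t b') ∈ invSet n σ := mem_invSet.2
      ⟨ht.1.mapsTo hb, ht.1.mapsTo hb', hlt, hge.lt_of_ne (σ.injective.ne hlt.ne')⟩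
    exact (mem_invSet.1 (hsub hinv)).2.2.2.not_gt hτlt
  refine ⟨(σ.bijOn fun x => apply_mem_Icc_iff hσ x).comp ht.1,
    fun b hb b' hb' h₁ h₂ h₃ => hkeep b hb b' hb' (ht.2.1 b hb b' hb' h₁ h₂ h₃)
      (hτt.2.1 b hb b' hb' h₁ h₂ h₃),
    fun b hb b' hb' h₁ h₂ h₃ => hkeep b hb b' hb' (ht.2.2.1 b hb b' hb' h₁ h₂ h₃)
      (hτt.2.2.1 b hb b' hb' h₁ h₂ h₃),
    fun b hb => ?_⟩
  rw [Function.comp_apply, ht.2.2.2 b hb]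
  exact apply_eq_self_of_mem_symmGroup hσ (by simp)

end MultiShape

open MultiShape in
theorem stmt5_general (Λ : MultiShape) (n : ℕ)
    (s : ℕ × ℕ × ℕ → ℕ) (hs : Λ.IsStd n s)
    (τ : Equiv.Perm ℕ) (ht : Λ.IsStd n (⇑τ ∘ s))
    (w : List ℕ) (hw : ∀ k ∈ w, 1 ≤ k ∧ k + 1 ≤ n)
    (hwτ : wordPerm w = τ)
    (hred : ∀ w' : List ℕ, (∀ k ∈ w', 1 ≤ k ∧ k + 1 ≤ n) → wordPerm w' = τ →
      w.length ≤ w'.length) :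
    ∀ l ≤ w.length, Λ.IsStd n (⇑(wordPerm (w.take l)) ∘ s) := by
  intro l _
  have hreduced : IsReducedWord n (w.take l ++ w.drop l) := by
    rw [List.take_append_drop]
    exact ⟨hw, fun w' hw' h => hred w' hw' (h.trans hwτ)⟩
  have hsub := hreduced.invSet_subset
  rw [List.take_append_drop, hwτ] at hsub
  exact hs.comp_of_invSet_subset ht
    (wordPerm_mem_symmGroup fun k hk => hw k (List.mem_of_mem_take hk)) hsub

open MultiShape in
/-- If `s, t` are standard tableaux of shape `λ` with `τ·s = t`, then for ANY
reduced expression `τ = s_{i_k}⋯s_{i_1}` (a word of minimal length among words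
in the simple transpositions `s_1,…,s_{n-1}` representing `τ`), each partial
product `s_{i_l}⋯s_{i_1}·s` is standard. -/
theorem stmt5 (Λ : MultiShape) (n : ℕ) (hwf : Λ.WellFormed)
    (hfin : Λ.cells.Finite) (hsize : Λ.cells.ncard = n)
    (s : ℕ × ℕ × ℕ → ℕ) (hs : Λ.IsStd n s)
    (τ : Equiv.Perm ℕ) (ht : Λ.IsStd n (⇑τ ∘ s))
    (w : List ℕ) (hw : ∀ k ∈ w, 1 ≤ k ∧ k + 1 ≤ n)
    (hwτ : wordPerm w = τ)
    (hred : ∀ w' : List ℕ, (∀ k ∈ w', 1 ≤ k ∧ k + 1 ≤ n) → wordPerm w' = τ →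
      w.length ≤ w'.length) :
    ∀ l ≤ w.length, Λ.IsStd n (⇑(wordPerm (w.take l)) ∘ s) :=
  stmt5_general Λ n s hs τ ht w hw hwτ hred
end

section
/- For nonnegative integers n, m, the identity Σ_{a+b+c=n} 2^{2n} · binomial(n,c)² · binomial(n-c,a)² · (a!/2^a) · (b!/2^b) · c! · m^c = 2ⁿ · (2m+2)ⁿ · n! holds, where the sum runs over a, b, c ≥ 0 with a + b + c = n. -/
/-!
Writing `c = n - a - b`, the summand is `2^{2n} n! · (n! / (a! b! c!)) · (1/2)^a (1/2)^b m^c`,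
so by the trinomial theorem the sum is `2^{2n} n! (1/2 + 1/2 + m)^n = 2^n (2m+2)^n n!`.
-/

open Finset Nat

theorem sum_range_sum_range_sub_eq_sum_antidiagonal {M : Type*} [AddCommMonoid M] (n : ℕ)
    (f : ℕ → ℕ → M) :
    ∑ a ∈ range (n + 1), ∑ b ∈ range (n + 1 - a), f a b
      = ∑ s ∈ range (n + 1), ∑ p ∈ antidiagonal s, f p.1 p.2 := by
  rw [sum_sigma', sum_sigma']
  refine sum_nbij' (fun p => ⟨p.1 + p.2, (p.1, p.2)⟩) (fun q => ⟨q.2.1, q.2.2⟩) ?_ ?_ ?_ ?_ ?_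
  · rintro ⟨a, b⟩ h
    simp only [mem_sigma, mem_range, HasAntidiagonal.mem_antidiagonal, and_true] at h ⊢
    omega
  · rintro ⟨s, a, b⟩ h
    simp only [mem_sigma, mem_range, HasAntidiagonal.mem_antidiagonal] at h ⊢
    omega
  · intro p _
    rfl
  · rintro ⟨s, a, b⟩ h
    simp only [mem_sigma, HasAntidiagonal.mem_antidiagonal] at h
    rw [h.2]
  · intro p _
    rfl

theorem add_add_pow_eq_sum_range_sum_range {R : Type*} [CommSemiring R] (x y z : R) (n : ℕ) :
    (x + y + z) ^ n = ∑ a ∈ range (n + 1), ∑ b ∈ range (n + 1 - a),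
      (n.choose (a + b) * (a + b).choose a : ℕ) * x ^ a * y ^ b * z ^ (n - a - b) := by
  rw [sum_range_sum_range_sub_eq_sum_antidiagonal, add_pow]
  refine sum_congr rfl fun s _ => ?_
  rw [(Commute.all x y).add_pow', sum_mul, sum_mul]
  refine sum_congr rfl fun p hp => ?_
  rw [HasAntidiagonal.mem_antidiagonal] at hp
  rw [← hp, Nat.sub_sub, nsmul_eq_mul]
  push_cast
  ring

theorem choose_mul_choose_mul_factorial_mul_factorial_mul_factorial (a b c : ℕ) :
    (a + b + c).choose c * (a + b).choose a * (a ! * b ! * c !) = (a + b + c)! := by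
  rw [← add_choose_mul_factorial_mul_factorial (a + b) c,
    ← add_choose_mul_factorial_mul_factorial a b, Nat.choose_symm_add]
  ring

theorem summand_eq_trinomial_term (n m a b : ℕ) (h : a + b ≤ n) :
    (2 : ℚ) ^ (2 * n) * ((n.choose (n - a - b)) : ℚ) ^ 2 *
        (((n - (n - a - b)).choose a) : ℚ) ^ 2 *
        ((a ! : ℚ) / 2 ^ a) * ((b ! : ℚ) / 2 ^ b) * ((n - a - b)! : ℚ) * (m : ℚ) ^ (n - a - b)
      = 2 ^ (2 * n) * n ! * ((n.choose (a + b) * (a + b).choose a : ℕ) *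
          (2⁻¹ : ℚ) ^ a * 2⁻¹ ^ b * (m : ℚ) ^ (n - a - b)) := by
  obtain ⟨c, rfl⟩ := Nat.exists_eq_add_of_le h
  rw [show a + b + c - a - b = c by omega, show a + b + c - c = a + b by omega,
    ← choose_mul_choose_mul_factorial_mul_factorial_mul_factorial, ← Nat.choose_symm_add]
  push_cast
  rw [inv_pow, inv_pow]
  field_simp

/-- Dimension-count identity for the cyclotomic Hecke-Clifford algebra with `r = 2m+2`:
`Σ_{a+b+c=n} 2^{2n} binom(n,c)² binom(n-c,a)² (a!/2^a)(b!/2^b) c! m^c = 2ⁿ (2m+2)ⁿ n!`. -/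
theorem stmt12 (n m : ℕ) :
    ∑ a ∈ Finset.range (n + 1), ∑ b ∈ Finset.range (n + 1 - a),
      (2 : ℚ) ^ (2 * n) * ((n.choose (n - a - b)) : ℚ) ^ 2 *
        (((n - (n - a - b)).choose a) : ℚ) ^ 2 *
        ((a.factorial : ℚ) / 2 ^ a) * ((b.factorial : ℚ) / 2 ^ b) *
        ((n - a - b).factorial : ℚ) * (m : ℚ) ^ (n - a - b)
      = 2 ^ n * (2 * (m : ℚ) + 2) ^ n * n.factorial := by
  calc _ = ∑ a ∈ range (n + 1), ∑ b ∈ range (n + 1 - a),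
        2 ^ (2 * n) * n ! * ((n.choose (a + b) * (a + b).choose a : ℕ) *
          (2⁻¹ : ℚ) ^ a * 2⁻¹ ^ b * (m : ℚ) ^ (n - a - b)) := by
        refine sum_congr rfl fun a ha => sum_congr rfl fun b hb =>
          summand_eq_trinomial_term n m a b ?_
        rw [mem_range] at ha hb
        omega
    _ = 2 ^ (2 * n) * n ! * (2⁻¹ + 2⁻¹ + (m : ℚ)) ^ n := by
        simp_rw [add_add_pow_eq_sum_range_sum_range, mul_sum]
    _ = 2 ^ n * (2 * (m : ℚ) + 2) ^ n * n ! := by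
        rw [pow_mul, mul_right_comm, ← mul_pow,
          show (2 : ℚ) ^ 2 * (2⁻¹ + 2⁻¹ + m) = 2 * (2 * m + 2) by ring, mul_pow]
end

section
/- In the affine Sergeev algebra h_n, the intertwining element Φ_i = s_i(x_i² - x_{i+1}²) + (x_i + x_{i+1}) + c_ic_{i+1}(x_i - x_{i+1}) satisfies Φ_i² = 2(x_i² + x_{i+1}²) - (x_i² - x_{i+1}²)², as well as Φ_i x_i = x_{i+1}Φ_i and Φ_i c_i = c_{i+1}Φ_i. -/
/-!
Write `e = c_i c_{i+1}`, `D = x_i² - x_{i+1}²` and `N = (x_i + x_{i+1}) + e (x_i - x_{i+1})`,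
so that `Φ_i = s_i D + N`. Since `e² = -1` and `e` anticommutes with `x_i` and `x_{i+1}`,
`N² = 2 (x_i² + x_{i+1}²)`, and applying `s_i x_i = x_{i+1} s_i - (1 + e)` twice gives
`s_i D + D s_i = -2N`. Both `s_i` and `D` commute with `N`, hence
`Φ_i² = (s_i D + 2N) s_i D + N² = -D s_i s_i D + N² = N² - D²`.
-/

namespace AffineSergeev

variable {B : Type*} [Ring B]

section Clifford

variable {a c c' : B}

theorem mul_mul_self_eq_neg_one (hc : c * c = 1) (hc' : c' * c' = 1) (hcc : c * c' = -(c' * c)) :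
    c * c' * (c * c') = -1 := by
  linear_combination (norm := noncomm_ring) c * hcc * c' - hc * (c' * c') - hc'

theorem mul_mul_anticomm_of_anticomm_of_comm (h : a * c = -(c * a)) (h' : a * c' = c' * a) :
    a * (c * c') = -(c * c' * a) := by
  linear_combination (norm := noncomm_ring) h * c' - c * h'

theorem mul_mul_anticomm_of_comm_of_anticomm (h : a * c = c * a) (h' : a * c' = -(c' * a)) :
    a * (c * c') = -(c * c' * a) := by
  linear_combination (norm := noncomm_ring) h * c' + c * h'

theorem mul_mul_anticomm_of_swap (h : a * c = c' * a) (h' : a * c' = c * a)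
    (hcc : c * c' = -(c' * c)) : a * (c * c') = -(c * c' * a) := by
  linear_combination (norm := noncomm_ring) h * c' + c' * h' + hcc * a

end Clifford

theorem commute_sq_of_anticomm {a b : B} (h : a * b = -(b * a)) : Commute (a ^ 2) b := by
  show a ^ 2 * b = b * a ^ 2
  linear_combination (norm := noncomm_ring) a * h - h * a

/-- The intertwiner `Φ_i` with `s, x, x', e` standing for `s_i, x_i, x_{i+1}, c_i c_{i+1}`. -/
def intertwiner (s x x' e : B) : B := s * (x ^ 2 - x' ^ 2) + (x + x') + e * (x - x')

def correction (x x' e : B) : B := x + x' + e * (x - x')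

section Intertwiner

variable {s x x' e : B}

theorem commute_sq_sub_sq_left (hx : Commute x x') : Commute (x ^ 2 - x' ^ 2) x :=
  ((Commute.refl x).pow_left 2).sub_left (hx.symm.pow_left 2)

theorem commute_sq_sub_sq_right (hx : Commute x x') : Commute (x ^ 2 - x' ^ 2) x' :=
  (hx.pow_left 2).sub_left ((Commute.refl x').pow_left 2)

theorem mul_x'_of_mul_x (hs : s * s = 1) (hsx : s * x = x' * s - (1 + e))
    (hse : s * e = -(e * s)) : s * x' = x * s + 1 - e := by
  linear_combination (norm := noncomm_ring)
    -(s * hsx * s) + hs * (x * s) - (s * x') * hs + hs + hse * s - e * hs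

theorem mul_sq_sub_sq (hsx : s * x = x' * s - (1 + e)) (hsx' : s * x' = x * s + 1 - e)
    (hex : x * e = -(e * x)) (hx'e : x' * e = -(e * x')) :
    s * (x ^ 2 - x' ^ 2) = -((x ^ 2 - x' ^ 2) * s) - 2 * correction x x' e := by
  have hsx2 : s * x ^ 2 = x' ^ 2 * s - correction x x' e := by
    unfold correction
    linear_combination (norm := noncomm_ring) hsx * x + x' * hsx - hx'e
  have hsx'2 : s * x' ^ 2 = x ^ 2 * s + correction x x' e := by
    unfold correction
    linear_combination (norm := noncomm_ring) hsx' * x' + x * hsx' - hex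
  linear_combination (norm := noncomm_ring) hsx2 - hsx'2

theorem commute_correction (hsx : s * x = x' * s - (1 + e)) (hsx' : s * x' = x * s + 1 - e)
    (hse : s * e = -(e * s)) : Commute s (correction x x' e) := by
  show s * correction x x' e = correction x x' e * s
  unfold correction
  linear_combination (norm := noncomm_ring) hsx + hsx' + hse * (x - x') - e * (hsx - hsx')

theorem commute_sq_sub_sq_correction (hx : Commute x x') (hex : x * e = -(e * x))
    (hx'e : x' * e = -(e * x')) : Commute (x ^ 2 - x' ^ 2) (correction x x' e) := by
  have hDx := commute_sq_sub_sq_left hx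
  have hDx' := commute_sq_sub_sq_right hx
  have hDe : Commute (x ^ 2 - x' ^ 2) e :=
    (commute_sq_of_anticomm hex).sub_left (commute_sq_of_anticomm hx'e)
  exact (hDx.add_right hDx').add_right (hDe.mul_right (hDx.sub_right hDx'))

theorem correction_mul_self (hx : Commute x x') (he : e * e = -1) (hex : x * e = -(e * x))
    (hx'e : x' * e = -(e * x')) :
    correction x x' e * correction x x' e = 2 * (x ^ 2 + x' ^ 2) := by
  unfold correction
  linear_combination (norm := noncomm_ring) (hex + hx'e) * (x - x') + e * (hex - hx'e) * (x - x')
    - he * ((x - x') * (x - x')) + 2 * e * hx.eq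

theorem intertwiner_mul_self (hs : s * s = 1) (hx : Commute x x') (he : e * e = -1)
    (hsx : s * x = x' * s - (1 + e)) (hse : s * e = -(e * s))
    (hex : x * e = -(e * x)) (hx'e : x' * e = -(e * x')) :
    intertwiner s x x' e * intertwiner s x x' e = 2 * (x ^ 2 + x' ^ 2) - (x ^ 2 - x' ^ 2) ^ 2 := by
  have hsx' := mul_x'_of_mul_x hs hsx hse
  have hsD := mul_sq_sub_sq hsx hsx' hex hx'e
  have hsN := commute_correction hsx hsx' hse
  have hDN := commute_sq_sub_sq_correction hx hex hx'e
  have hN := correction_mul_self hx he hex hx'e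
  unfold intertwiner correction at *
  linear_combination (norm := noncomm_ring) hsD * (s * (x ^ 2 - x' ^ 2))
    - (x ^ 2 - x' ^ 2) * hs * (x ^ 2 - x' ^ 2) + s * hDN.eq + hsN.eq * (x ^ 2 - x' ^ 2) + hN

theorem intertwiner_mul_x (hx : Commute x x') (hsx : s * x = x' * s - (1 + e))
    (hx'e : x' * e = -(e * x')) :
    intertwiner s x x' e * x = x' * intertwiner s x x' e := by
  unfold intertwiner
  linear_combination (norm := noncomm_ring)
    s * (commute_sq_sub_sq_left hx).eq + hsx * (x ^ 2 - x' ^ 2) - hx'e * (x - x')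

theorem correction_mul_c {c c' : B} (hc : c * c = 1) (hc' : c' * c' = 1)
    (hcc : c * c' = -(c' * c))
    (hxc : x * c = -(c * x)) (hx'c : Commute x' c) :
    correction x x' (c * c') * c = c' * correction x x' (c * c') := by
  unfold correction
  linear_combination (norm := noncomm_ring) hxc + hx'c.eq + c * c' * (hxc - hx'c.eq)
    - (hcc * c - c' * hc) * (x + x') - (hcc * c' - c * hc') * (x - x')

theorem intertwiner_mul_c {c c' : B} (hc : c * c = 1) (hc' : c' * c' = 1)
    (hcc : c * c' = -(c' * c)) (hsc : s * c = c' * s) (hxc : x * c = -(c * x))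
    (hx'c : Commute x' c) : intertwiner s x x' (c * c') * c = c' * intertwiner s x x' (c * c') := by
  have hDc : Commute (x ^ 2 - x' ^ 2) c := (commute_sq_of_anticomm hxc).sub_left (hx'c.pow_left 2)
  have hNc := correction_mul_c hc hc' hcc hxc hx'c
  unfold intertwiner correction at *
  linear_combination (norm := noncomm_ring) s * hDc.eq + hsc * (x ^ 2 - x' ^ 2) + hNc

end Intertwiner

end AffineSergeev

theorem stmt15_general (B : Type) [Ring B]
    (s xi xi' ci ci' : B)
    (hs : s * s = 1)
    (hx : xi * xi' = xi' * xi)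
    (hci : ci * ci = 1) (hci' : ci' * ci' = 1) (hcc : ci * ci' = -(ci' * ci))
    (hsx : s * xi = xi' * s - (1 + ci * ci'))
    (hsc : s * ci = ci' * s) (hsc' : s * ci' = ci * s)
    (hxc : xi * ci = -(ci * xi)) (hxc2 : xi * ci' = ci' * xi)
    (hxc3 : xi' * ci' = -(ci' * xi')) (hxc4 : xi' * ci = ci * xi') :
    let Φ : B := s * (xi ^ 2 - xi' ^ 2) + (xi + xi') + ci * ci' * (xi - xi')
    Φ * Φ = 2 * (xi ^ 2 + xi' ^ 2) - (xi ^ 2 - xi' ^ 2) ^ 2 ∧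
      Φ * xi = xi' * Φ ∧ Φ * ci = ci' * Φ := by
  open AffineSergeev in
  have he := mul_mul_self_eq_neg_one hci hci' hcc
  have hse := mul_mul_anticomm_of_swap hsc hsc' hcc
  have hxe := mul_mul_anticomm_of_anticomm_of_comm hxc hxc2
  have hx'e := mul_mul_anticomm_of_comm_of_anticomm hxc4 hxc3
  exact ⟨intertwiner_mul_self hs hx he hsx hse hxe hx'e, intertwiner_mul_x hx hsx hx'e,
    intertwiner_mul_c hci hci' hcc hsc hxc hxc4⟩

/-- In the affine Sergeev algebra — modelled here by a `K`-algebra `B`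
(char K ≠ 2) containing elements `s, xi, xi', ci, ci'` satisfying the defining
local relations — the intertwining element
`Φ = s(xi² - xi'²) + (xi + xi') + cici'(xi - xi')` satisfies
`Φ² = 2(xi² + xi'²) - (xi² - xi'²)²`, `Φ xi = xi' Φ` and `Φ ci = ci' Φ`. -/
theorem stmt15 (K B : Type) [Field K] [Ring B] [Algebra K B]
    (hchar : ringChar K ≠ 2)
    (s xi xi' ci ci' : B)
    (hs : s * s = 1)
    (hx : xi * xi' = xi' * xi)
    (hci : ci * ci = 1) (hci' : ci' * ci' = 1) (hcc : ci * ci' = -(ci' * ci))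
    (hsx : s * xi = xi' * s - (1 + ci * ci'))
    (hsc : s * ci = ci' * s) (hsc' : s * ci' = ci * s)
    (hxc : xi * ci = -(ci * xi)) (hxc2 : xi * ci' = ci' * xi)
    (hxc3 : xi' * ci' = -(ci' * xi')) (hxc4 : xi' * ci = ci * xi') :
    let Φ : B := s * (xi ^ 2 - xi' ^ 2) + (xi + xi') + ci * ci' * (xi - xi')
    Φ * Φ = 2 * (xi ^ 2 + xi' ^ 2) - (xi ^ 2 - xi' ^ 2) ^ 2 ∧
      Φ * xi = xi' * Φ ∧ Φ * ci = ci' * Φ :=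
  stmt15_general B s xi xi' ci ci' hs hx hci hci' hcc hsx hsc hsc' hxc hxc2 hxc3 hxc4
end
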